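/- arXiv:2105.01045 — 5 statements merged into one kernel-verified Lean document; each statement's English description precedes it below -/
import Mathlib

section
/- Let n ≥ 1 be an integer and let c > 1 and λ > 0 be real numbers. Let X_1, …, X_n be i.i.d. random variables taking values in the positive integers such that P(X_1 > x) ≤ c · e^(−λx) for every integer x ≥ 0. Then the expected difference run-length codeword length of the sample satisfies E[L(W)] ≤ (13·(2λ+1)·c/λ) · (log₂(n + 1))². -/
/-! The gaps `D_2, …, D_n` telescope to `X_(n) − X_(1)`, and every run of zero gaps starts right
after `D_1` or after a positive gap, so with `L_γ(m) ≤ 2m − 1` and run lengths at most `n + 1`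
the codeword length is at most `6 log₂(n + 1) · max_i X_i`. For the maximum,
`max_i X_i ≤ t + ∑_i (X_i − t)⁺`; the exponential tail bounds each `E[(X_i − t)⁺]` by the geometric
sum `c e^{-λt} / (1 − e^{-λ})`, and `t = ⌈log (c n) / λ⌉` makes the `n` excesses together at most
`1 + 1 / λ`. -/

open MeasureTheory ProbabilityTheory

/-- The Elias gamma codeword length of a positive integer `m`:
`L_γ(m) = ⌊2·log₂ m + 1⌋`. -/
noncomputable def eliasGammaLen (m : ℕ) : ℝ :=
  ((⌊2 * Real.logb 2 (m : ℝ) + 1⌋ : ℤ) : ℝ)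

/-- The difference run-length codeword length of a sample `x : Fin n → ℕ` of
positive integers.  With `y` the (1-based) order statistics, `D 1 = y 1`,
`D i = y i - y (i-1)` for `i ∈ [2:n]`, `D i = 1` for `i > n` (the convention
`D_{n+1} = 1`), and `j i` the number of consecutive zeros of `D` starting at
index `i`, the length is
`L_γ(D 1) + ∑_{i ∈ U} (1 + L_γ(D i)) + ∑_{i ∈ V} (1 + L_γ(j i))` where
`U = {i ∈ [2:n] : D i > 0}` and `V = {i ∈ [2:n] : D i = 0, D (i-1) ≠ 0}`. -/
noncomputable def drlLength (n : ℕ) (x : Fin n → ℕ) : ℝ :=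
  -- `y i` is the `i`-th order statistic (1-based)
  let y : ℕ → ℕ := fun i => if h : i - 1 < n then x (Tuple.sort x ⟨i - 1, h⟩) else 0
  let D : ℕ → ℕ := fun i =>
    if i = 0 then 0
    else if i = 1 then y 1
    else if i ≤ n then y i - y (i - 1)
    else 1
  -- `j i` = number of consecutive zeros of `D` starting at index `i`
  let j : ℕ → ℕ := fun i =>
    ((Finset.range (n + 1)).filter fun k => ∀ l ≤ k, D (i + l) = 0).card
  eliasGammaLen (D 1) +
    ∑ i ∈ Finset.Icc 2 n,
      (if 0 < D i then 1 + eliasGammaLen (D i)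
       else if D (i - 1) ≠ 0 then 1 + eliasGammaLen (j i)
       else 0)

open Real Finset
open scoped ENNReal

theorem eliasGammaLen_nonneg (m : ℕ) : 0 ≤ eliasGammaLen m := by
  unfold eliasGammaLen
  have : 0 ≤ logb 2 (m : ℝ) := by
    rcases Nat.eq_zero_or_pos m with rfl | hm
    · simp
    · exact logb_nonneg one_lt_two (by exact_mod_cast hm)
  exact_mod_cast Int.floor_nonneg.mpr (by linarith)

theorem eliasGammaLen_le_two_mul_sub_one {m : ℕ} (hm : 1 ≤ m) :
    eliasGammaLen m ≤ 2 * m - 1 := by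
  have hlog : logb 2 (m : ℝ) ≤ m - 1 := by
    rw [logb_le_iff_le_rpow one_lt_two (by exact_mod_cast hm),
      show (m : ℝ) - 1 = (m - 1 : ℕ) by push_cast [Nat.cast_sub hm]; ring, rpow_natCast]
    have := Nat.lt_two_pow_self (n := m - 1)
    exact_mod_cast (show m ≤ 2 ^ (m - 1) by omega)
  calc eliasGammaLen m ≤ 2 * logb 2 (m : ℝ) + 1 := Int.floor_le _
    _ ≤ 2 * m - 1 := by linarith

theorem eliasGammaLen_le_of_le {m N : ℕ} (hm : m ≤ N) (hN : 1 ≤ N) :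
    eliasGammaLen m ≤ 2 * logb 2 N + 1 := by
  refine (Int.floor_le _).trans ?_
  have : logb 2 (m : ℝ) ≤ logb 2 N := by
    rcases Nat.eq_zero_or_pos m with rfl | h
    · simpa using logb_nonneg one_lt_two (by exact_mod_cast hN)
    · exact logb_le_logb_of_le one_lt_two (by exact_mod_cast h) (by exact_mod_cast hm)
  linarith

-- `D i = 0` with `D (i - 1) ≠ 0` is the start of a run of zeros; `i - 1` is then `1` or a
-- positive entry of `D` in `[2:n]`.
theorem card_zeroRunStarts_le (D : ℕ → ℕ) (n : ℕ) :
    #{i ∈ Icc 2 n | D i = 0 ∧ D (i - 1) ≠ 0} ≤ ∑ i ∈ Icc 2 n, D i + 1 := by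
  have hmaps : Set.MapsTo (· - 1) ({i ∈ Icc 2 n | D i = 0 ∧ D (i - 1) ≠ 0} : Finset ℕ)
      (insert 1 {i ∈ Icc 2 n | D i ≠ 0} : Finset ℕ) := by
    intro i hi
    simp only [coe_filter, mem_Icc, Set.mem_ofPred_eq] at hi
    simp only [coe_insert, coe_filter, mem_Icc, Set.mem_insert_iff, Set.mem_ofPred_eq]
    omega
  have hinj : Set.InjOn (· - 1) ({i ∈ Icc 2 n | D i = 0 ∧ D (i - 1) ≠ 0} : Finset ℕ) := by
    intro a ha b hb hab
    simp only [coe_filter, mem_Icc, Set.mem_ofPred_eq] at ha hb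
    simp only at hab
    omega
  calc #{i ∈ Icc 2 n | D i = 0 ∧ D (i - 1) ≠ 0}
      ≤ #(insert 1 {i ∈ Icc 2 n | D i ≠ 0}) := card_le_card_of_injOn _ hmaps hinj
    _ ≤ #{i ∈ Icc 2 n | D i ≠ 0} + 1 := card_insert_le _ _
    _ ≤ ∑ i ∈ Icc 2 n, D i + 1 := by
        gcongr
        rw [card_eq_sum_ones, sum_filter]
        exact sum_le_sum fun i _ => by split_ifs <;> omega

noncomputable def drlSummand (D j : ℕ → ℕ) (i : ℕ) : ℝ :=
  if 0 < D i then 1 + eliasGammaLen (D i)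
  else if D (i - 1) ≠ 0 then 1 + eliasGammaLen (j i)
  else 0

theorem drlSummand_nonneg (D j : ℕ → ℕ) (i : ℕ) : 0 ≤ drlSummand D j i := by
  unfold drlSummand
  split_ifs
  · linarith [eliasGammaLen_nonneg (D i)]
  · linarith [eliasGammaLen_nonneg (j i)]
  · rfl

theorem sum_drlSummand_le (D j : ℕ → ℕ) (n : ℕ) {L : ℝ}
    (hj : ∀ i, eliasGammaLen (j i) ≤ 2 * L + 1) :
    ∑ i ∈ Icc 2 n, drlSummand D j i ≤
      2 * ((∑ i ∈ Icc 2 n, D i : ℕ) : ℝ) + (2 * L + 2) * ((∑ i ∈ Icc 2 n, D i : ℕ) + 1) := by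
  have hL : 0 ≤ 2 * L + 2 := by linarith [hj 0, eliasGammaLen_nonneg (j 0)]
  have hterm (i : ℕ) : drlSummand D j i ≤
      2 * (D i : ℝ) + if D i = 0 ∧ D (i - 1) ≠ 0 then 2 * L + 2 else 0 := by
    unfold drlSummand
    by_cases hpos : 0 < D i
    · rw [if_pos hpos, if_neg (by omega)]
      linarith [eliasGammaLen_le_two_mul_sub_one hpos]
    · simp only [Nat.eq_zero_of_not_pos hpos, lt_irrefl, if_false, Nat.cast_zero, mul_zero,
        zero_add, true_and]
      split_ifs
      · linarith [hj i]
      · rfl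
  calc ∑ i ∈ Icc 2 n, drlSummand D j i
      ≤ ∑ i ∈ Icc 2 n, (2 * (D i : ℝ) + if D i = 0 ∧ D (i - 1) ≠ 0 then 2 * L + 2 else 0) :=
        sum_le_sum fun i _ => hterm i
    _ = 2 * ∑ i ∈ Icc 2 n, (D i : ℝ) +
          (2 * L + 2) * #{i ∈ Icc 2 n | D i = 0 ∧ D (i - 1) ≠ 0} := by
        rw [sum_add_distrib, ← mul_sum, ← sum_filter, sum_const, nsmul_eq_mul]
        ring
    _ ≤ _ := by
        push_cast
        gcongr
        exact_mod_cast card_zeroRunStarts_le D n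

-- The `let`-bound `y`, `D` and `j` of `drlLength`.
def orderStat (n : ℕ) (x : Fin n → ℕ) (i : ℕ) : ℕ :=
  if h : i - 1 < n then x (Tuple.sort x ⟨i - 1, h⟩) else 0

def drlGap (n : ℕ) (x : Fin n → ℕ) (i : ℕ) : ℕ :=
  if i = 0 then 0
  else if i = 1 then orderStat n x 1
  else if i ≤ n then orderStat n x i - orderStat n x (i - 1)
  else 1

def drlZeroRun (n : ℕ) (x : Fin n → ℕ) (i : ℕ) : ℕ :=
  #{k ∈ range (n + 1) | ∀ l ≤ k, drlGap n x (i + l) = 0}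

theorem drlLength_eq (n : ℕ) (x : Fin n → ℕ) :
    drlLength n x = eliasGammaLen (drlGap n x 1) +
      ∑ i ∈ Icc 2 n, drlSummand (drlGap n x) (drlZeroRun n x) i := rfl

section OrderStat

variable {n : ℕ} {x : Fin n → ℕ}

theorem orderStat_le_sup (i : ℕ) : orderStat n x i ≤ univ.sup x := by
  unfold orderStat
  split_ifs
  · exact le_sup (mem_univ _)
  · exact Nat.zero_le _

theorem orderStat_pos (hx : ∀ k, 0 < x k) {i : ℕ} (hi : i - 1 < n) : 0 < orderStat n x i := by
  rw [orderStat, dif_pos hi]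
  exact hx _

theorem orderStat_mono {i j : ℕ} (hi : 1 ≤ i) (hij : i ≤ j) (hj : j ≤ n) :
    orderStat n x i ≤ orderStat n x j := by
  rw [orderStat, orderStat, dif_pos (by omega), dif_pos (by omega)]
  exact Tuple.monotone_sort x (Fin.mk_le_mk.mpr (by omega))

theorem orderStat_one_add_sum_drlGap {m : ℕ} (hm : 1 ≤ m) (hmn : m ≤ n) :
    orderStat n x 1 + ∑ i ∈ Icc 2 m, drlGap n x i = orderStat n x m := by
  induction m, hm using Nat.le_induction with
  | base => simp
  | succ m hm ih =>
    rw [← insert_Icc_right_eq_Icc_add_one (by omega), sum_insert (by simp), add_left_comm,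
      ih (by omega), drlGap, if_neg (by omega), if_neg (by omega), if_pos hmn,
      Nat.add_sub_cancel, Nat.sub_add_cancel (orderStat_mono hm (by omega) hmn)]

theorem drlZeroRun_le (i : ℕ) : drlZeroRun n x i ≤ n + 1 :=
  (card_filter_le _ _).trans_eq (card_range _)

end OrderStat

theorem one_le_logb_two_natCast_add_one {n : ℕ} (hn : 1 ≤ n) : 1 ≤ logb 2 (n + 1) := by
  rw [le_logb_iff_rpow_le one_lt_two (by positivity), rpow_one]
  exact_mod_cast Nat.succ_le_succ hn

theorem drlLength_nonneg (n : ℕ) (x : Fin n → ℕ) : 0 ≤ drlLength n x := by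
  rw [drlLength_eq]
  exact add_nonneg (eliasGammaLen_nonneg _) (sum_nonneg fun i _ => drlSummand_nonneg _ _ i)

theorem drlLength_le_mul_sup {n : ℕ} (hn : 1 ≤ n) {x : Fin n → ℕ} (hx : ∀ k, 0 < x k) :
    drlLength n x ≤ 6 * logb 2 (n + 1) * univ.sup x := by
  set L := logb 2 ((n : ℝ) + 1)
  set S := ∑ i ∈ Icc 2 n, drlGap n x i
  have hL : 1 ≤ L := one_le_logb_two_natCast_add_one hn
  have hfirst_pos : 1 ≤ orderStat n x 1 := orderStat_pos hx (by omega)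
  have hfirst : eliasGammaLen (drlGap n x 1) ≤ 2 * orderStat n x 1 - 1 :=
    eliasGammaLen_le_two_mul_sub_one hfirst_pos
  have hrest := sum_drlSummand_le (drlGap n x) (drlZeroRun n x) n (L := L) fun i => by
    simpa [L] using eliasGammaLen_le_of_le (drlZeroRun_le i) (by omega)
  have htotal : orderStat n x 1 + S ≤ univ.sup x :=
    (orderStat_one_add_sum_drlGap hn le_rfl).trans_le (orderStat_le_sup n)
  rw [drlLength_eq]
  have htotal' : (orderStat n x 1 : ℝ) + S ≤ univ.sup x := by exact_mod_cast htotal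
  have hfirst_pos' : (1 : ℝ) ≤ orderStat n x 1 := by exact_mod_cast hfirst_pos
  nlinarith [mul_le_mul_of_nonneg_left (show (S : ℝ) + 1 ≤ univ.sup x by linarith)
    (show (0 : ℝ) ≤ 2 * L + 2 by linarith), mul_nonneg (sub_nonneg.mpr hL)
    (show (0 : ℝ) ≤ univ.sup x by positivity)]

section Integrals

variable {Ω : Type*} [MeasurableSpace Ω] {μ : Measure Ω}

theorem integral_le_mul_of_norm_le_mul_natCast {f : Ω → ℝ} {g : Ω → ℕ} {a B : ℝ}
    (ha : 0 ≤ a) (hB : 0 ≤ B) (hfg : ∀ ω, ‖f ω‖ ≤ a * g ω)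
    (hg : ∫⁻ ω, (g ω : ℝ≥0∞) ∂μ ≤ ENNReal.ofReal B) : ∫ ω, f ω ∂μ ≤ a * B := by
  refine (le_abs_self _).trans <| (norm_integral_le_lintegral_norm f).trans <|
    ENNReal.toReal_le_of_le_ofReal (mul_nonneg ha hB) ?_
  calc ∫⁻ ω, ENNReal.ofReal ‖f ω‖ ∂μ ≤ ∫⁻ ω, ENNReal.ofReal a * g ω ∂μ :=
        lintegral_mono fun ω => (ENNReal.ofReal_le_ofReal (hfg ω)).trans_eq <| by
          rw [ENNReal.ofReal_mul ha, ENNReal.ofReal_natCast]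
    _ = ENNReal.ofReal a * ∫⁻ ω, (g ω : ℝ≥0∞) ∂μ :=
        lintegral_const_mul' _ _ ENNReal.ofReal_ne_top
    _ ≤ ENNReal.ofReal (a * B) := by
        rw [ENNReal.ofReal_mul ha]
        gcongr

theorem lintegral_natCast_eq_tsum_measure_lt {X : Ω → ℕ} (hX : AEMeasurable X μ) :
    ∫⁻ ω, (X ω : ℝ≥0∞) ∂μ = ∑' k : ℕ, μ {ω | k < X ω} := by
  have hset : ∀ k : ℕ, NullMeasurableSet {ω | k < X ω} μ := fun k =>
    hX.nullMeasurableSet_preimage (MeasurableSet.of_discrete (s := {m : ℕ | k < m}))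
  have hind : ∀ ω, (X ω : ℝ≥0∞) = ∑' k : ℕ, {ω | k < X ω}.indicator (fun _ => 1) ω := by
    intro ω
    rw [tsum_eq_sum (s := range (X ω)) fun k hk =>
        Set.indicator_of_notMem (by simpa using hk) _,
      sum_congr rfl fun k hk =>
        Set.indicator_of_mem (show ω ∈ {ω | k < X ω} from mem_range.mp hk) _]
    simp
  simp_rw [hind]
  rw [lintegral_tsum fun k => aemeasurable_one.indicator₀ (hset k)]
  exact tsum_congr fun k => by rw [lintegral_indicator_const₀ (hset k), one_mul]

theorem lintegral_tsub_le_of_exp_tail {X : Ω → ℕ} (hX : AEMeasurable X μ) {c lam : ℝ}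
    (hc : 0 ≤ c) (hlam : 0 < lam)
    (htail : ∀ x : ℕ, μ {ω | x < X ω} ≤ ENNReal.ofReal (c * exp (-lam * x))) (t : ℕ) :
    ∫⁻ ω, ((X ω - t : ℕ) : ℝ≥0∞) ∂μ ≤
      ENNReal.ofReal (c * exp (-lam * t) * (1 - exp (-lam))⁻¹) := by
  have hr : exp (-lam) < 1 := exp_lt_one_iff.mpr (by linarith)
  have hterm (k : ℕ) :
      c * exp (-lam * ((t + k : ℕ) : ℝ)) = c * exp (-lam * t) * exp (-lam) ^ k := by
    rw [← exp_nat_mul, mul_assoc, ← exp_add]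
    push_cast
    ring_nf
  have hsum : Summable fun k : ℕ => c * exp (-lam * t) * exp (-lam) ^ k :=
    (summable_geometric_of_lt_one (exp_pos _).le hr).mul_left _
  have hXt : AEMeasurable (fun ω => X ω - t) μ :=
    (measurable_of_countable fun m : ℕ => m - t).comp_aemeasurable hX
  calc ∫⁻ ω, ((X ω - t : ℕ) : ℝ≥0∞) ∂μ = ∑' k : ℕ, μ {ω | t + k < X ω} := by
        rw [lintegral_natCast_eq_tsum_measure_lt hXt]
        simp only [Nat.lt_sub_iff_add_lt']
    _ ≤ ∑' k : ℕ, ENNReal.ofReal (c * exp (-lam * t) * exp (-lam) ^ k) :=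
        ENNReal.tsum_le_tsum fun k => (htail (t + k)).trans_eq (by rw [hterm])
    _ = ENNReal.ofReal (c * exp (-lam * t) * (1 - exp (-lam))⁻¹) := by
        rw [← ENNReal.ofReal_tsum_of_nonneg (fun k => by positivity) hsum, tsum_mul_left,
          tsum_geometric_of_lt_one (exp_pos _).le hr]

theorem lintegral_sup_le_add_sum_lintegral_tsub {ι : Type*} (s : Finset ι) (X : ι → Ω → ℕ)
    (hX : ∀ i, AEMeasurable (X i) μ) (t : ℕ) :
    ∫⁻ ω, ((s.sup fun i => X i ω : ℕ) : ℝ≥0∞) ∂μ ≤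
      t * μ Set.univ + ∑ i ∈ s, ∫⁻ ω, ((X i ω - t : ℕ) : ℝ≥0∞) ∂μ := by
  have hpt (ω : Ω) : (s.sup fun i => X i ω) ≤ t + ∑ i ∈ s, (X i ω - t) :=
    Finset.sup_le fun i hi => by
      have := single_le_sum (f := fun i => X i ω - t) (fun _ _ => Nat.zero_le _) hi
      omega
  have hXt (i : ι) : AEMeasurable (fun ω => ((X i ω - t : ℕ) : ℝ≥0∞)) μ :=
    (measurable_of_countable fun m : ℕ => ((m - t : ℕ) : ℝ≥0∞)).comp_aemeasurable (hX i)
  calc ∫⁻ ω, ((s.sup fun i => X i ω : ℕ) : ℝ≥0∞) ∂μ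
      ≤ ∫⁻ ω, ((t : ℝ≥0∞) + ∑ i ∈ s, ((X i ω - t : ℕ) : ℝ≥0∞)) ∂μ :=
        lintegral_mono fun ω => by exact_mod_cast Nat.cast_le.mpr (hpt ω)
    _ = t * μ Set.univ + ∑ i ∈ s, ∫⁻ ω, ((X i ω - t : ℕ) : ℝ≥0∞) ∂μ := by
        rw [lintegral_add_left measurable_const, lintegral_const,
          lintegral_finsetSum' _ fun i _ => hXt i]

theorem inv_one_sub_exp_neg_le {lam : ℝ} (hlam : 0 < lam) :
    (1 - exp (-lam))⁻¹ ≤ (lam + 1) / lam := by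
  have h : exp (-lam) * (lam + 1) ≤ 1 := by
    rw [exp_neg, inv_mul_le_iff₀ (exp_pos lam), mul_one]
    exact add_one_le_exp lam
  rw [inv_le_comm₀ (by linarith [exp_lt_one_iff.mpr (neg_lt_zero.mpr hlam)]) (by positivity),
    inv_div, div_le_iff₀ (by positivity)]
  linarith

theorem lintegral_sup_le_of_exp_tail [IsProbabilityMeasure μ] {n : ℕ} (X : Fin n → Ω → ℕ)
    (hX : ∀ i, AEMeasurable (X i) μ) {c lam : ℝ} (hcn : 1 ≤ c * n) (hlam : 0 < lam)
    (htail : ∀ i (x : ℕ), μ {ω | x < X i ω} ≤ ENNReal.ofReal (c * exp (-lam * x))) :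
    ∫⁻ ω, ((univ.sup fun i => X i ω : ℕ) : ℝ≥0∞) ∂μ ≤
      ENNReal.ofReal (log (c * n) / lam + 1 + (lam + 1) / lam) := by
  have hc : 0 < c := pos_of_mul_pos_left (by linarith) (Nat.cast_nonneg n)
  have hlog : 0 ≤ log (c * n) / lam := div_nonneg (log_nonneg hcn) hlam.le
  set t : ℕ := ⌈log (c * n) / lam⌉₊
  have hn_exp : n * (c * exp (-lam * t)) ≤ 1 := by
    have hlt : log (c * n) ≤ lam * t := (div_le_iff₀' hlam).mp (Nat.le_ceil _)
    calc n * (c * exp (-lam * t)) = (c * n) * exp (-(lam * t)) := by ring_nf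
      _ ≤ (c * n) * exp (-log (c * n)) := by gcongr
      _ = 1 := by rw [exp_neg, exp_log (by linarith), mul_inv_cancel₀ (by positivity)]
  have hgeom := inv_one_sub_exp_neg_le hlam
  have hgeom_pos : 0 ≤ (1 - exp (-lam))⁻¹ :=
    inv_nonneg.mpr (by linarith [exp_lt_one_iff.mpr (neg_lt_zero.mpr hlam)])
  calc ∫⁻ ω, ((univ.sup fun i => X i ω : ℕ) : ℝ≥0∞) ∂μ
      ≤ t * μ Set.univ + ∑ i, ∫⁻ ω, ((X i ω - t : ℕ) : ℝ≥0∞) ∂μ :=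
        lintegral_sup_le_add_sum_lintegral_tsub _ X hX t
    _ ≤ t + ∑ _i : Fin n, ENNReal.ofReal (c * exp (-lam * t) * (1 - exp (-lam))⁻¹) := by
        rw [measure_univ, mul_one]
        gcongr with i
        exact lintegral_tsub_le_of_exp_tail (hX i) hc.le hlam (htail i) t
    _ = ENNReal.ofReal (t + n * (c * exp (-lam * t) * (1 - exp (-lam))⁻¹)) := by
        rw [sum_const, card_univ, Fintype.card_fin, nsmul_eq_mul,
          ENNReal.ofReal_add (by positivity) (by positivity),
          ENNReal.ofReal_mul (Nat.cast_nonneg n), ENNReal.ofReal_natCast, ENNReal.ofReal_natCast]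
    _ ≤ ENNReal.ofReal (log (c * n) / lam + 1 + (lam + 1) / lam) := by
        refine ENNReal.ofReal_le_ofReal ?_
        have ht : (t : ℝ) ≤ log (c * n) / lam + 1 := (Nat.ceil_lt_add_one hlog).le
        have : n * (c * exp (-lam * t) * (1 - exp (-lam))⁻¹) ≤ (1 - exp (-lam))⁻¹ := by
          rw [← mul_assoc]
          exact mul_le_of_le_one_left hgeom_pos hn_exp
        linarith

end Integrals

theorem six_mul_logb_mul_le {c lam : ℝ} (hc : 1 < c) (hlam : 0 < lam) {n : ℕ} (hn : 1 ≤ n) :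
    6 * logb 2 (n + 1) * (log (c * n) / lam + 1 + (lam + 1) / lam) ≤
      13 * (2 * lam + 1) * c / lam * logb 2 (n + 1) ^ 2 := by
  set L := logb 2 ((n : ℝ) + 1)
  have hL := one_le_logb_two_natCast_add_one hn
  have hn' : (0 : ℝ) < n := by exact_mod_cast hn
  have hlogc : log c ≤ c - 1 := log_le_sub_one_of_pos (by linarith)
  have hlogn : log n ≤ 0.7 * L := by
    have h2 : L * log 2 = log ((n : ℝ) + 1) := div_mul_cancel₀ _ (log_pos one_lt_two).ne'
    have := log_le_log hn' (show (n : ℝ) ≤ n + 1 by linarith)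
    nlinarith [log_two_lt_d9]
  have key : 6 * L * (log c + log n + 2 * lam + 1) ≤ 13 * (2 * lam + 1) * c * L ^ 2 := by
    nlinarith [mul_le_mul_of_nonneg_left hlogc (show 0 ≤ 6 * L by linarith),
      mul_le_mul_of_nonneg_left hlogn (show 0 ≤ 6 * L by linarith),
      mul_nonneg (mul_nonneg hlam.le (sub_nonneg.mpr hc.le)) (show 0 ≤ L by linarith),
      mul_nonneg (sub_nonneg.mpr hc.le) (show 0 ≤ L ^ 2 by positivity),
      mul_nonneg (mul_nonneg hlam.le (by linarith : (0:ℝ) ≤ c)) (sub_nonneg.mpr hL)]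
  calc 6 * L * (log (c * n) / lam + 1 + (lam + 1) / lam)
      = 6 * L * (log c + log n + 2 * lam + 1) / lam := by
        rw [log_mul (by positivity) hn'.ne']
        field_simp
        ring
    _ ≤ 13 * (2 * lam + 1) * c * L ^ 2 / lam := by gcongr
    _ = 13 * (2 * lam + 1) * c / lam * L ^ 2 := by ring

theorem drl_expected_length_exponential_tail_general
    {Ω : Type*} [MeasurableSpace Ω] (μ : Measure Ω) [IsProbabilityMeasure μ]
    (n : ℕ) (hn : 1 ≤ n) (c lam : ℝ) (hc : 1 < c) (hlam : 0 < lam)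
    (X : Fin n → Ω → ℕ)
    (hident : ∀ i, IdentDistrib (X i) (X ⟨0, hn⟩) μ μ)
    (hpos : ∀ i ω, 0 < X i ω)
    (htail : ∀ x : ℕ, (μ {ω | x < X ⟨0, hn⟩ ω}).toReal ≤ c * Real.exp (-lam * x)) :
    ∫ ω, drlLength n (fun i => X i ω) ∂μ ≤
      13 * (2 * lam + 1) * c / lam * (Real.logb 2 (n + 1)) ^ 2 := by
  have hX (i : Fin n) : AEMeasurable (X i) μ := (hident i).aemeasurable_fst
  have htail' (i : Fin n) (x : ℕ) :
      μ {ω | x < X i ω} ≤ ENNReal.ofReal (c * Real.exp (-lam * x)) := by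
    rw [← ENNReal.ofReal_toReal (measure_ne_top μ _)]
    refine ENNReal.ofReal_le_ofReal (le_of_eq_of_le ?_ (htail x))
    exact congrArg ENNReal.toReal ((hident i).measure_mem_eq measurableSet_Ioi)
  have hcn : 1 ≤ c * n := one_le_mul_of_one_le_of_one_le hc.le (by exact_mod_cast hn)
  calc ∫ ω, drlLength n (fun i => X i ω) ∂μ
      ≤ 6 * logb 2 (n + 1) * (log (c * n) / lam + 1 + (lam + 1) / lam) :=
        integral_le_mul_of_norm_le_mul_natCast
          (by linarith [one_le_logb_two_natCast_add_one hn])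
          (by have := div_nonneg (log_nonneg hcn) hlam.le; positivity)
          (fun ω => (norm_of_nonneg (drlLength_nonneg n _)).trans_le
            (drlLength_le_mul_sup hn fun k => hpos k ω))
          (lintegral_sup_le_of_exp_tail X hX hcn hlam htail')
    _ ≤ 13 * (2 * lam + 1) * c / lam * (Real.logb 2 (n + 1)) ^ 2 := six_mul_logb_mul_le hc hlam hn

/-- If `X_1, …, X_n` are i.i.d. positive-integer valued random
variables with `P(X_1 > x) ≤ c·e^{-λx}` for every integer `x ≥ 0` (`c > 1`, `λ > 0`),
then the expected difference run-length codeword length satisfies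
`E[L(W)] ≤ (13·(2λ+1)·c/λ)·(log₂(n + 1))²`. -/
theorem drl_expected_length_exponential_tail
    {Ω : Type*} [MeasurableSpace Ω] (μ : Measure Ω) [IsProbabilityMeasure μ]
    (n : ℕ) (hn : 1 ≤ n) (c lam : ℝ) (hc : 1 < c) (hlam : 0 < lam)
    (X : Fin n → Ω → ℕ) (hmeas : ∀ i, Measurable (X i))
    (hindep : iIndepFun X μ)
    (hident : ∀ i, IdentDistrib (X i) (X ⟨0, hn⟩) μ μ)
    (hpos : ∀ i ω, 0 < X i ω)
    (htail : ∀ x : ℕ, (μ {ω | x < X ⟨0, hn⟩ ω}).toReal ≤ c * Real.exp (-lam * x)) :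
    ∫ ω, drlLength n (fun i => X i ω) ∂μ ≤
      13 * (2 * lam + 1) * c / lam * (Real.logb 2 (n + 1)) ^ 2 :=
  drl_expected_length_exponential_tail_general μ n hn c lam hc hlam X hident hpos htail
end

section
/- Let c > 1 and λ > 1 be reals and let f : [0,∞) → [0,∞) be a non-increasing probability density function (∫₀^∞ f(t) dt = 1) satisfying ∫_x^∞ f(t) dt ≤ c·x^(−λ) for all x > 0. Let t₀ = (c·(λ+1))^(1/λ) and define f* : [0,∞) → ℝ by f*(x) = c·λ·t₀^(−λ−1) for x ≤ t₀ and f*(x) = c·λ·x^(−λ−1) for x > t₀. Then f majorizes f*, that is, ∫₀^x f(t) dt ≥ ∫₀^x f*(t) dt for every x ≥ 0. -/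
/-!
For `x ≥ t₀` the integral `∫₀^x f*` equals `1 - c x^{-λ}`, which the tail bound shows to be
at most `∫₀^x f`. On `[0, t₀]` the density `f*` is constant, so `∫₀^x f*` is linear in `x`;
since `f` is non-increasing its running average `(1/x) ∫₀^x f` is non-increasing too, and the
inequality at `x = t₀` propagates down to all `x ≤ t₀`.
-/

open MeasureTheory

/-- The comparison density `f*`: with `t₀ = (c(λ+1))^{1/λ}`, `f*(x) = cλ·t₀^{-λ-1}`
for `x ≤ t₀` and `f*(x) = cλ·x^{-λ-1}` for `x > t₀`. -/
noncomputable def fstar (c lam : ℝ) (x : ℝ) : ℝ :=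
  if x ≤ (c * (lam + 1)) ^ (1 / lam) then
    c * lam * ((c * (lam + 1)) ^ (1 / lam)) ^ (-lam - 1)
  else c * lam * x ^ (-lam - 1)

open Set intervalIntegral

theorem AntitoneOn.sub_mul_intervalIntegral_le {f : ℝ → ℝ} {a x y : ℝ}
    (hf : AntitoneOn f (Icc a y)) (hax : a ≤ x) (hxy : x ≤ y) :
    (x - a) * ∫ t in a..y, f t ≤ (y - a) * ∫ t in a..x, f t := by
  have hint_ax : IntervalIntegrable f volume a x :=
    (hf.mono <| by rw [uIcc_of_le hax]; exact Icc_subset_Icc_right hxy).intervalIntegrable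
  have hint_xy : IntervalIntegrable f volume x y :=
    (hf.mono <| by rw [uIcc_of_le hxy]; exact Icc_subset_Icc_left hax).intervalIntegrable
  have hx : x ∈ Icc a y := ⟨hax, hxy⟩
  have h_left : (x - a) * f x ≤ ∫ t in a..x, f t := by
    simpa using integral_mono_on hax intervalIntegrable_const hint_ax
      fun t ht => hf ⟨ht.1, ht.2.trans hxy⟩ hx ht.2
  have h_right : ∫ t in x..y, f t ≤ (y - x) * f x := by
    simpa [mul_comm] using integral_mono_on hxy hint_xy intervalIntegrable_const
      fun t ht => hf hx ⟨hax.trans ht.1, ht.2⟩ ht.1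
  rw [← integral_add_adjacent_intervals hint_ax hint_xy]
  nlinarith [mul_le_mul_of_nonneg_left h_right (sub_nonneg.2 hax),
    mul_le_mul_of_nonneg_left h_left (sub_nonneg.2 hxy)]

section fstar

variable {c lam x : ℝ}

noncomputable def fstarThreshold (c lam : ℝ) : ℝ := (c * (lam + 1)) ^ (1 / lam)

noncomputable def fstarPlateau (c lam : ℝ) : ℝ := c * lam * fstarThreshold c lam ^ (-lam - 1)

theorem fstarThreshold_pos (hc : 0 < c) (hlam : 0 < lam) : 0 < fstarThreshold c lam := by
  unfold fstarThreshold
  positivity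

theorem fstarThreshold_rpow_neg (hc : 0 < c) (hlam : 0 < lam) :
    fstarThreshold c lam ^ (-lam) = (c * (lam + 1))⁻¹ := by
  rw [fstarThreshold, ← Real.rpow_mul (by positivity), one_div_mul_eq_div, neg_div_self hlam.ne',
    Real.rpow_neg_one]

theorem fstar_of_le_fstarThreshold (hx : x ≤ fstarThreshold c lam) :
    fstar c lam x = fstarPlateau c lam :=
  if_pos hx

theorem fstar_of_fstarThreshold_le (hx : fstarThreshold c lam ≤ x) :
    fstar c lam x = c * lam * x ^ (-lam - 1) := by
  unfold fstar
  split_ifs with h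
  · rw [le_antisymm h hx]
  · rfl

theorem integral_fstar_of_le_fstarThreshold (hx : 0 ≤ x) (hxt : x ≤ fstarThreshold c lam) :
    ∫ t in (0 : ℝ)..x, fstar c lam t = x * fstarPlateau c lam := by
  rw [integral_congr fun t ht => fstar_of_le_fstarThreshold
    ((uIcc_of_le hx ▸ ht : t ∈ Icc 0 x).2.trans hxt)]
  simp

theorem integral_fstar_of_fstarThreshold_le (hc : 0 < c) (hlam : 0 < lam)
    (hx : fstarThreshold c lam ≤ x) :
    ∫ t in (0 : ℝ)..x, fstar c lam t = 1 - c * x ^ (-lam) := by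
  set t₀ := fstarThreshold c lam
  have ht₀ : 0 < t₀ := fstarThreshold_pos hc hlam
  have h0 : (0 : ℝ) ∉ uIcc t₀ x := by
    rw [uIcc_of_le hx]
    exact fun h => ht₀.not_ge h.1
  have h_tail : EqOn (fstar c lam) (fun t => c * lam * t ^ (-lam - 1)) (uIcc t₀ x) :=
    fun t ht => fstar_of_fstarThreshold_le (uIcc_of_le hx ▸ ht : t ∈ Icc t₀ x).1
  have hint_head : IntervalIntegrable (fstar c lam) volume 0 t₀ :=
    intervalIntegrable_const.congr fun t ht =>
      (fstar_of_le_fstarThreshold (uIoc_of_le ht₀.le ▸ ht : t ∈ Ioc 0 t₀).2).symm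
  have hint_tail : IntervalIntegrable (fstar c lam) volume t₀ x :=
    ((intervalIntegral.intervalIntegrable_rpow (Or.inr h0)).const_mul (c * lam)).congr
      fun t ht => (h_tail (uIoc_subset_uIcc ht)).symm
  have h_plateau : t₀ * fstarPlateau c lam = c * lam * t₀ ^ (-lam) := by
    rw [fstarPlateau, Real.rpow_sub_one ht₀.ne']
    field_simp
  rw [← integral_add_adjacent_intervals hint_head hint_tail,
    integral_fstar_of_le_fstarThreshold ht₀.le le_rfl, integral_congr h_tail,
    intervalIntegral.integral_const_mul, integral_rpow (Or.inr ⟨by linarith, h0⟩), h_plateau,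
    sub_add_cancel, fstarThreshold_rpow_neg hc hlam]
  field_simp
  ring

end fstar

theorem pdf_majorizes_fstar_general
    (c lam : ℝ) (hc : 1 < c) (hlam : 1 < lam)
    (f : ℝ → ℝ)
    (hf_anti : AntitoneOn f (Set.Ici (0 : ℝ)))
    (hf_int : IntegrableOn f (Set.Ioi (0 : ℝ)))
    (hf_pdf : ∫ t in Set.Ioi (0 : ℝ), f t = 1)
    (htail : ∀ x : ℝ, 0 < x → ∫ t in Set.Ioi x, f t ≤ c * x ^ (-lam)) :
    ∀ x : ℝ, 0 ≤ x → ∫ t in (0 : ℝ)..x, fstar c lam t ≤ ∫ t in (0 : ℝ)..x, f t := by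
  have hc₀ : 0 < c := one_pos.trans hc
  have hlam₀ : 0 < lam := one_pos.trans hlam
  set t₀ := fstarThreshold c lam
  have ht₀ : 0 < t₀ := fstarThreshold_pos hc₀ hlam₀
  have h_beyond : ∀ x, t₀ ≤ x → ∫ t in (0 : ℝ)..x, fstar c lam t ≤ ∫ t in (0 : ℝ)..x, f t := by
    intro x hx
    rw [integral_fstar_of_fstarThreshold_le hc₀ hlam₀ hx,
      ← integral_Ioi_sub_Ioi hf_int (ht₀.le.trans hx), hf_pdf]
    linarith [htail x (ht₀.trans_le hx)]
  intro x hx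
  rcases le_total t₀ x with hxt | hxt
  · exact h_beyond x hxt
  have h_at : t₀ * fstarPlateau c lam ≤ ∫ t in (0 : ℝ)..t₀, f t := by
    simpa only [integral_fstar_of_le_fstarThreshold ht₀.le le_rfl] using h_beyond t₀ le_rfl
  have h_avg : x * ∫ t in (0 : ℝ)..t₀, f t ≤ t₀ * ∫ t in (0 : ℝ)..x, f t := by
    simpa using (hf_anti.mono Icc_subset_Ici_self).sub_mul_intervalIntegral_le hx hxt
  rw [integral_fstar_of_le_fstarThreshold hx hxt]
  refine le_of_mul_le_mul_left ?_ ht₀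
  nlinarith [mul_le_mul_of_nonneg_left h_at hx]

/-- Any non-increasing pdf `f` on `[0,∞)` with tail bound
`∫_x^∞ f(t) dt ≤ c·x^{-λ}` majorizes the density `f*`, i.e.,
`∫₀^x f ≥ ∫₀^x f*` for every `x ≥ 0`. -/
theorem pdf_majorizes_fstar
    (c lam : ℝ) (hc : 1 < c) (hlam : 1 < lam)
    (f : ℝ → ℝ) (hf_nonneg : ∀ x, 0 ≤ f x)
    (hf_anti : AntitoneOn f (Set.Ici (0 : ℝ)))
    (hf_int : IntegrableOn f (Set.Ioi (0 : ℝ)))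
    (hf_pdf : ∫ t in Set.Ioi (0 : ℝ), f t = 1)
    (htail : ∀ x : ℝ, 0 < x → ∫ t in Set.Ioi x, f t ≤ c * x ^ (-lam)) :
    ∀ x : ℝ, 0 ≤ x → ∫ t in (0 : ℝ)..x, fstar c lam t ≤ ∫ t in (0 : ℝ)..x, f t :=
  pdf_majorizes_fstar_general c lam hc hlam f hf_anti hf_int hf_pdf htail
end

section
/- Let f, g : [0,∞) → [0,∞) be non-increasing integrable functions with ∫₀^x f(t) dt ≤ ∫₀^x g(t) dt for every x ≥ 0 and with ∫₀^∞ f(t) dt = ∫₀^∞ g(t) dt (finite). Then for every concave function φ : [0,∞) → ℝ with φ(0) = 0 such that φ∘f and φ∘g are integrable on [0,∞), one has ∫₀^∞ φ(f(t)) dt ≥ ∫₀^∞ φ(g(t)) dt. -/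
/-!
Let `c t` be the right derivative of `φ` at `f t`. Concavity gives the pointwise bound
`φ (g t) - φ (f t) ≤ c t * (g t - f t)`, and `c` is nondecreasing because `f` is non-increasing
and `φ'` is non-increasing. The partial integrals of `g - f` are nonnegative, so integration by
parts in Abel's form bounds `∫₀^X (φ ∘ g - φ ∘ f)` by `c X * ∫₀^X (g - f)`. With equal totals,
`∫₀^X (g - f) ≤ ∫_X^∞ f`, and `c X * f t ≤ φ (f t)` for `t > X` because `φ (0) = 0`. So the
bound is at most the tail `∫_X^∞ |φ ∘ f|`. Let `X` increase to the end of the support of `f`;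
`g` vanishes almost everywhere beyond that point as well.
-/

open MeasureTheory Set Filter Topology

namespace ConcaveOn

variable {S : Set ℝ} {φ : ℝ → ℝ} {x y : ℝ}

theorem antitoneOn_rightDeriv (hφ : ConcaveOn ℝ S φ) :
    AntitoneOn (fun x => derivWithin φ (Ioi x) x) (interior S) := by
  intro x hx y hy hxy
  have := hφ.neg.monotoneOn_rightDeriv hx hy hxy
  simp only [derivWithin.neg] at this
  linarith

theorem slope_le_rightDeriv_of_mem_interior (hφ : ConcaveOn ℝ S φ) (hx : x ∈ interior S)
    (hy : y ∈ S) (hxy : x < y) : slope φ x y ≤ derivWithin φ (Ioi x) x := by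
  refine hφ.slope_le_rightDeriv (interior_subset hx) hy hxy ?_
  simpa using (hφ.neg.differentiableWithinAt_Ioi_of_mem_interior hx).neg

theorem rightDeriv_le_slope_of_mem_interior (hφ : ConcaveOn ℝ S φ) (hy : y ∈ S)
    (hx : x ∈ interior S) (hyx : y < x) : derivWithin φ (Ioi x) x ≤ slope φ y x := by
  have := (hφ.neg.slope_le_leftDeriv_of_mem_interior hy hx hyx).trans
    (hφ.neg.leftDeriv_le_rightDeriv_of_mem_interior hx)
  rw [derivWithin.neg, show slope (-φ) y x = -slope φ y x from slope_neg φ y x] at this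
  linarith

theorem le_add_rightDeriv_mul (hφ : ConcaveOn ℝ S φ) (hx : x ∈ interior S) (hy : y ∈ S) :
    φ y ≤ φ x + derivWithin φ (Ioi x) x * (y - x) := by
  rcases lt_trichotomy x y with hxy | rfl | hyx
  · have := hφ.slope_le_rightDeriv_of_mem_interior hx hy hxy
    rw [slope_def_field, div_le_iff₀ (sub_pos.2 hxy)] at this
    linarith
  · simp
  · have := hφ.rightDeriv_le_slope_of_mem_interior hy hx hyx
    rw [slope_def_field, le_div_iff₀ (sub_pos.2 hyx)] at this
    linarith

theorem rightDeriv_mul_le (hφ : ConcaveOn ℝ (Ici 0) φ) (hφ0 : φ 0 = 0) (hx : 0 < x)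
    (hy : 0 ≤ y) (hyx : y ≤ x) : derivWithin φ (Ioi x) x * y ≤ φ y := by
  rcases hy.eq_or_lt with rfl | hy
  · simp [hφ0]
  have hx' : x ∈ interior (Ici (0 : ℝ)) := by rwa [interior_Ici]
  have h := (hφ.rightDeriv_le_slope_of_mem_interior self_mem_Ici hx' hx).trans
    (hφ.slope_anti self_mem_Ici ⟨hy.le, hy.ne'⟩ ⟨hx.le, hx.ne'⟩ hyx)
  rw [slope_def_field, hφ0, sub_zero, sub_zero, le_div_iff₀ hy] at h
  exact h

end ConcaveOn

theorem setIntegral_Ioc_inter_nonneg_of_isLowerSet {k : ℝ → ℝ} {a b : ℝ} {A : Set ℝ}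
    (hA : IsLowerSet A) (hK : ∀ x ∈ Icc a b, 0 ≤ ∫ t in Ioc a x, k t) :
    0 ≤ ∫ t in Ioc a b ∩ A, k t := by
  set E := Ioc a b ∩ A
  rcases E.eq_empty_or_nonempty with hE | hE
  · simp [hE]
  have hbdd : BddAbove E := ⟨b, fun t ht => ht.1.2⟩
  set x := sSup E
  have hx : x ∈ Icc a b :=
    ⟨hE.some_mem.1.1.le.trans (le_csSup hbdd hE.some_mem), csSup_le hE fun t ht => ht.1.2⟩
  have hEx : E ⊆ Ioc a x := fun t ht => ⟨ht.1.1, le_csSup hbdd ht⟩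
  have hxE : Ioo a x ⊆ E := fun t ht => by
    obtain ⟨u, hu, htu⟩ := exists_lt_of_lt_csSup hE ht.2
    exact ⟨⟨ht.1, htu.le.trans hu.1.2⟩, hA htu.le hu.2⟩
  have hae : E =ᵐ[volume] Ioc a x :=
    hEx.eventuallyLE.antisymm (Ioo_ae_eq_Ioc.symm.le.trans hxE.eventuallyLE)
  rw [setIntegral_congr_set hae]
  exact hK x hx

theorem setIntegral_sub_mul_nonneg_of_monotone {c k : ℝ → ℝ} {a b : ℝ} (hc : Monotone c)
    (hk : IntegrableOn k (Ioc a b)) (hK : ∀ x ∈ Icc a b, 0 ≤ ∫ t in Ioc a x, k t) :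
    0 ≤ ∫ t in Ioc a b, (c b - c t) * k t := by
  -- Integrate `k t` over `{(t, s) | c t ≤ s}`, `s ∈ [c a, c b)`, in both orders: the `s`-sections
  -- have length `c b - c t`, the `t`-sections are initial segments of `(a, b]`.
  set ν := volume.restrict (Ico (c a) (c b))
  have : IsFiniteMeasure ν := isFiniteMeasure_restrict.2 measure_Ico_lt_top.ne
  have hmeas : MeasurableSet {p : ℝ × ℝ | c p.1 ≤ p.2} :=
    measurableSet_le (hc.measurable.comp measurable_fst) measurable_snd
  set F := {p : ℝ × ℝ | c p.1 ≤ p.2}.indicator fun p => k p.1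
  have hF : Integrable F ((volume.restrict (Ioc a b)).prod ν) :=
    (hk.comp_fst ν).indicator hmeas
  have hs_first : ∫ p, F p ∂((volume.restrict (Ioc a b)).prod ν)
      = ∫ t in Ioc a b, (c b - c t) * k t := by
    rw [integral_prod F hF]
    refine setIntegral_congr_fun measurableSet_Ioc fun t ht => ?_
    have hIco : Ici (c t) ∩ Ico (c a) (c b) = Ico (c t) (c b) := by
      ext s
      simp only [mem_inter_iff, mem_Ici, mem_Ico]
      exact ⟨fun h => ⟨h.1, h.2.2⟩, fun h => ⟨h.1, (hc ht.1.le).trans h.1, h.2⟩⟩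
    have hlen : ν.real (Ici (c t)) = c b - c t := by
      rw [measureReal_restrict_apply measurableSet_Ici, hIco, Real.volume_real_Ico,
        max_eq_left (sub_nonneg.2 (hc ht.2))]
    change ∫ s, (Ici (c t)).indicator (fun _ => k t) s ∂ν = _
    rw [integral_indicator_const _ measurableSet_Ici, hlen, smul_eq_mul]
  have ht_first : 0 ≤ ∫ p, F p ∂((volume.restrict (Ioc a b)).prod ν) := by
    rw [integral_prod_symm F hF]
    refine integral_nonneg fun s => ?_
    have hAs : MeasurableSet {t | c t ≤ s} := measurableSet_le hc.measurable measurable_const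
    change 0 ≤ ∫ t in Ioc a b, {t | c t ≤ s}.indicator k t
    rw [integral_indicator hAs, Measure.restrict_restrict hAs, inter_comm]
    exact setIntegral_Ioc_inter_nonneg_of_isLowerSet (fun u v huv hv => (hc huv).trans hv) hK
  exact hs_first ▸ ht_first

theorem IntervalIntegrable.monotoneOn_mul {c k : ℝ → ℝ} {a b : ℝ} (hab : a ≤ b)
    (hc : MonotoneOn c (Icc a b)) (hk : IntervalIntegrable k volume a b) :
    IntervalIntegrable (fun t => c t * k t) volume a b := by
  rw [intervalIntegrable_iff_integrableOn_Ioc_of_le hab] at hk ⊢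
  refine hk.bdd_mul (c := max |c a| |c b|)
    (aemeasurable_restrict_of_monotoneOn measurableSet_Ioc
      (hc.mono Ioc_subset_Icc_self)).aestronglyMeasurable ?_
  filter_upwards [ae_restrict_mem measurableSet_Ioc] with t ht
  exact abs_le_max_abs_abs (hc ⟨le_rfl, hab⟩ (Ioc_subset_Icc_self ht) ht.1.le)
    (hc (Ioc_subset_Icc_self ht) ⟨hab, le_rfl⟩ ht.2)

theorem intervalIntegral_mul_le_of_monotoneOn {c k : ℝ → ℝ} {a b : ℝ} (hab : a ≤ b)
    (hc : MonotoneOn c (Icc a b)) (hk : IntervalIntegrable k volume a b)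
    (hK : ∀ x ∈ Icc a b, 0 ≤ ∫ t in a..x, k t) :
    ∫ t in a..b, c t * k t ≤ c b * ∫ t in a..b, k t := by
  set c' := fun t => c (projIcc a b hab t)
  have hc' : Monotone c' := fun x y hxy =>
    hc (projIcc a b hab x).2 (projIcc a b hab y).2 (monotone_projIcc hab hxy)
  have hcc' : ∀ t ∈ Icc a b, c' t = c t := fun t ht => by simp [c', projIcc_of_mem hab ht]
  have hsplit : ∫ t in Ioc a b, (c' b - c' t) * k t
      = c b * (∫ t in Ioc a b, k t) - ∫ t in Ioc a b, c t * k t := by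
    rw [← integral_const_mul, ← integral_sub (hk.1.const_mul _) (hk.monotoneOn_mul hab hc).1]
    refine setIntegral_congr_fun measurableSet_Ioc fun t ht => ?_
    simp only [hcc' b ⟨hab, le_rfl⟩, hcc' t (Ioc_subset_Icc_self ht)]
    ring
  have := setIntegral_sub_mul_nonneg_of_monotone hc' hk.1 fun x hx => by
    simpa only [intervalIntegral.integral_of_le hx.1] using hK x hx
  rw [intervalIntegral.integral_of_le hab, intervalIntegral.integral_of_le hab]
  linarith

theorem MeasureTheory.IntegrableOn.intervalIntegrable_of_Ioi {E : Type*} [NormedAddCommGroup E]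
    {μ : Measure ℝ} {f : ℝ → E} {a b : ℝ} (hf : IntegrableOn f (Ioi a) μ) (hab : a ≤ b) :
    IntervalIntegrable f μ a b :=
  (intervalIntegrable_iff_integrableOn_Ioc_of_le hab).2 (hf.mono_set Ioc_subset_Ioi_self)

theorem intervalIntegral_sub_eq_setIntegral_Ioi_sub {f g : ℝ → ℝ} {a x : ℝ} (hax : a ≤ x)
    (hf : IntegrableOn f (Ioi a)) (hg : IntegrableOn g (Ioi a))
    (htotal : ∫ t in Ioi a, f t = ∫ t in Ioi a, g t) :
    ∫ t in a..x, (g t - f t) = (∫ t in Ioi x, f t) - ∫ t in Ioi x, g t := by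
  rw [intervalIntegral.integral_sub (hg.intervalIntegrable_of_Ioi hax)
    (hf.intervalIntegrable_of_Ioi hax), ← intervalIntegral.integral_Ioi_sub_Ioi hg hax,
    ← intervalIntegral.integral_Ioi_sub_Ioi hf hax]
  linarith

theorem intervalIntegral_le_setIntegral_Ioi_of_forall_Ioo {D w : ℝ → ℝ} {a x₀ : ℝ}
    (hax : a < x₀) (hD : IntegrableOn D (Ioi a)) (hw : IntegrableOn w (Ioi a))
    (h : ∀ X ∈ Ioo a x₀, ∫ t in a..X, D t ≤ ∫ t in Ioi X, w t) :
    ∫ t in a..x₀, D t ≤ ∫ t in Ioi x₀, w t := by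
  have hcont : ∀ v : ℝ → ℝ, IntegrableOn v (Ioi a) →
      Tendsto (fun X => ∫ t in a..X, v t) (𝓝[<] x₀) (𝓝 (∫ t in a..x₀, v t)) := by
    intro v hv
    have hv' : IntegrableOn v (uIcc a x₀) := by
      rw [uIcc_of_le hax.le, integrableOn_Icc_iff_integrableOn_Ioc]
      exact hv.mono_set Ioc_subset_Ioi_self
    have hIcc : uIcc a x₀ ∈ 𝓝[<] x₀ := by
      rw [uIcc_of_le hax.le]
      exact Icc_mem_nhdsLT hax
    exact (intervalIntegral.continuousOn_primitive_interval hv' x₀ right_mem_uIcc)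
      |>.mono_of_mem_nhdsWithin hIcc
  have htail : ∀ X, a ≤ X →
      ∫ t in Ioi X, w t = (∫ t in Ioi a, w t) - ∫ t in a..X, w t :=
    fun X hX => by linarith [intervalIntegral.integral_Ioi_sub_Ioi hw hX]
  rw [htail x₀ hax.le]
  refine le_of_tendsto_of_tendsto (hcont D hD) ((hcont w hw).const_sub (∫ t in Ioi a, w t)) ?_
  filter_upwards [Ioo_mem_nhdsLT hax] with X hX
  rw [← htail X hX.1.le]
  exact h X hX

theorem AntitoneOn.forall_pos_or_exists_pos_Ioo_eq_zero_Ioi {f : ℝ → ℝ}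
    (hf : AntitoneOn f (Ici 0)) (hf_nonneg : ∀ t, 0 ≤ f t) :
    (∀ t, 0 < t → 0 < f t) ∨
      ∃ x₀, 0 ≤ x₀ ∧ (∀ t ∈ Ioo 0 x₀, 0 < f t) ∧ ∀ t, x₀ < t → f t = 0 := by
  by_cases! h : ∀ t, 0 < t → 0 < f t
  · exact Or.inl h
  obtain ⟨t₁, ht₁, hft₁⟩ := h
  set Z := {t | 0 < t ∧ f t = 0}
  have hZ : Z.Nonempty := ⟨t₁, ht₁, le_antisymm hft₁ (hf_nonneg t₁)⟩
  have hbdd : BddBelow Z := ⟨0, fun t ht => ht.1.le⟩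
  refine Or.inr ⟨sInf Z, le_csInf hZ fun t ht => ht.1.le, fun t ht => ?_, fun t ht => ?_⟩
  · exact (hf_nonneg t).lt_of_ne' fun h => (csInf_le hbdd ⟨ht.1, h⟩).not_gt ht.2
  · obtain ⟨s, hs, hst⟩ := exists_lt_of_csInf_lt hZ ht
    refine le_antisymm ?_ (hf_nonneg t)
    exact hs.2 ▸ hf (mem_Ici.2 hs.1.le) (mem_Ici.2 (hs.1.le.trans hst.le)) hst.le

theorem ae_restrict_Ioi_eq_zero_of_majorizes {f g : ℝ → ℝ} {a x : ℝ} (hax : a ≤ x)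
    (hg_nonneg : ∀ t, 0 ≤ g t) (hf : IntegrableOn f (Ioi a)) (hg : IntegrableOn g (Ioi a))
    (hmaj : ∫ t in a..x, f t ≤ ∫ t in a..x, g t)
    (htotal : ∫ t in Ioi a, f t = ∫ t in Ioi a, g t) (hzero : ∀ t, x < t → f t = 0) :
    ∀ᵐ t ∂volume.restrict (Ioi x), g t = 0 := by
  have hf0 : ∫ t in Ioi x, f t = 0 := setIntegral_eq_zero_of_forall_eq_zero hzero
  have htail := intervalIntegral_sub_eq_setIntegral_Ioi_sub hax hf hg htotal
  rw [intervalIntegral.integral_sub (hg.intervalIntegrable_of_Ioi hax)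
    (hf.intervalIntegrable_of_Ioi hax)] at htail
  have hg0 : ∫ t in Ioi x, g t = 0 :=
    le_antisymm (by linarith) (setIntegral_nonneg measurableSet_Ioi fun t _ => hg_nonneg t)
  exact (setIntegral_eq_zero_iff_of_nonneg_ae (ae_of_all _ hg_nonneg)
    (hg.mono_set (Ioi_subset_Ioi hax))).1 hg0

theorem intervalIntegral_comp_sub_comp_le_rightDeriv_mul {f g φ : ℝ → ℝ} {X : ℝ}
    (hX : 0 ≤ X) (hφ : ConcaveOn ℝ (Ici 0) φ) (hf : AntitoneOn f (Icc 0 X)) (hfX : 0 < f X)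
    (hg : ∀ t, 0 ≤ g t) (hD : IntervalIntegrable (fun t => φ (g t) - φ (f t)) volume 0 X)
    (hk : IntervalIntegrable (fun t => g t - f t) volume 0 X)
    (hK : ∀ x ∈ Icc 0 X, 0 ≤ ∫ t in 0..x, (g t - f t)) :
    ∫ t in 0..X, (φ (g t) - φ (f t))
      ≤ derivWithin φ (Ioi (f X)) (f X) * ∫ t in 0..X, (g t - f t) := by
  have hpos : ∀ t ∈ Icc 0 X, f t ∈ interior (Ici 0) := fun t ht => by
    rw [interior_Ici]
    exact hfX.trans_le (hf ht ⟨hX, le_rfl⟩ ht.2)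
  have hc : MonotoneOn (fun t => derivWithin φ (Ioi (f t)) (f t)) (Icc 0 X) :=
    fun s hs t ht hst => hφ.antitoneOn_rightDeriv (hpos t ht) (hpos s hs) (hf hs ht hst)
  calc ∫ t in 0..X, (φ (g t) - φ (f t))
      ≤ ∫ t in 0..X, derivWithin φ (Ioi (f t)) (f t) * (g t - f t) := by
        refine intervalIntegral.integral_mono_on hX hD (hk.monotoneOn_mul hX hc) fun t ht => ?_
        linarith [hφ.le_add_rightDeriv_mul (hpos t ht) (hg t : g t ∈ Ici 0)]
    _ ≤ _ := intervalIntegral_mul_le_of_monotoneOn hX hc hk hK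

theorem rightDeriv_mul_le_setIntegral_Ioi_abs {f φ : ℝ → ℝ} {X K : ℝ}
    (hφ : ConcaveOn ℝ (Ici 0) φ) (hφ0 : φ 0 = 0) (hf_nonneg : ∀ t, 0 ≤ f t)
    (hf_anti : AntitoneOn f (Ici X)) (hfX : 0 < f X) (hf : IntegrableOn f (Ioi X))
    (hφf : IntegrableOn (fun t => φ (f t)) (Ioi X)) (hK0 : 0 ≤ K)
    (hK : K ≤ ∫ t in Ioi X, f t) :
    derivWithin φ (Ioi (f X)) (f X) * K ≤ ∫ t in Ioi X, |φ (f t)| := by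
  set d := derivWithin φ (Ioi (f X)) (f X)
  rcases le_or_gt d 0 with hd | hd
  · exact (mul_nonpos_of_nonpos_of_nonneg hd hK0).trans
      (setIntegral_nonneg measurableSet_Ioi fun t _ => abs_nonneg _)
  calc d * K ≤ d * ∫ t in Ioi X, f t := mul_le_mul_of_nonneg_left hK hd.le
    _ = ∫ t in Ioi X, d * f t := (integral_const_mul _ _).symm
    _ ≤ ∫ t in Ioi X, |φ (f t)| := by
      refine setIntegral_mono_on (hf.const_mul d) hφf.abs measurableSet_Ioi fun t ht => ?_
      exact (hφ.rightDeriv_mul_le hφ0 hfX (hf_nonneg t)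
        (hf_anti self_mem_Ici (mem_Ici.2 (le_of_lt ht)) (le_of_lt ht))).trans (le_abs_self _)

theorem intervalIntegral_comp_sub_comp_le_setIntegral_Ioi_abs {f g φ : ℝ → ℝ} {X : ℝ}
    (hX : 0 ≤ X) (hf_nonneg : ∀ t, 0 ≤ f t) (hg_nonneg : ∀ t, 0 ≤ g t)
    (hf_anti : AntitoneOn f (Ici 0)) (hf_int : IntegrableOn f (Ioi 0))
    (hg_int : IntegrableOn g (Ioi 0))
    (hmaj : ∀ x, 0 ≤ x → ∫ t in 0..x, f t ≤ ∫ t in 0..x, g t)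
    (htotal : ∫ t in Ioi 0, f t = ∫ t in Ioi 0, g t) (hφ : ConcaveOn ℝ (Ici 0) φ)
    (hφ0 : φ 0 = 0) (hφf_int : IntegrableOn (fun t => φ (f t)) (Ioi 0))
    (hφg_int : IntegrableOn (fun t => φ (g t)) (Ioi 0)) (hfX : 0 < f X) :
    ∫ t in 0..X, (φ (g t) - φ (f t)) ≤ ∫ t in Ioi X, |φ (f t)| := by
  have hK : ∀ x ∈ Icc 0 X, 0 ≤ ∫ t in 0..x, (g t - f t) := fun x hx => by
    rw [intervalIntegral.integral_sub (hg_int.intervalIntegrable_of_Ioi hx.1)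
      (hf_int.intervalIntegrable_of_Ioi hx.1)]
    linarith [hmaj x hx.1]
  have hK_le : ∫ t in 0..X, (g t - f t) ≤ ∫ t in Ioi X, f t := by
    rw [intervalIntegral_sub_eq_setIntegral_Ioi_sub hX hf_int hg_int htotal]
    have hg_tail : 0 ≤ ∫ t in Ioi X, g t :=
      setIntegral_nonneg measurableSet_Ioi fun t _ => hg_nonneg t
    linarith
  calc ∫ t in 0..X, (φ (g t) - φ (f t))
      ≤ derivWithin φ (Ioi (f X)) (f X) * ∫ t in 0..X, (g t - f t) :=
        intervalIntegral_comp_sub_comp_le_rightDeriv_mul hX hφ (hf_anti.mono Icc_subset_Ici_self)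
          hfX hg_nonneg ((hφg_int.sub hφf_int).intervalIntegrable_of_Ioi hX)
          ((hg_int.sub hf_int).intervalIntegrable_of_Ioi hX) hK
    _ ≤ ∫ t in Ioi X, |φ (f t)| :=
        rightDeriv_mul_le_setIntegral_Ioi_abs hφ hφ0 hf_nonneg
          (hf_anti.mono (Ici_subset_Ici.2 hX)) hfX (hf_int.mono_set (Ioi_subset_Ioi hX))
          (hφf_int.mono_set (Ioi_subset_Ioi hX))
          (hK X ⟨hX, le_rfl⟩) hK_le

theorem majorization_concave_characterization_general
    (f g : ℝ → ℝ)
    (hf_nonneg : ∀ x, 0 ≤ f x) (hg_nonneg : ∀ x, 0 ≤ g x)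
    (hf_anti : AntitoneOn f (Set.Ici (0 : ℝ)))
    (hf_int : IntegrableOn f (Set.Ioi (0 : ℝ)))
    (hg_int : IntegrableOn g (Set.Ioi (0 : ℝ)))
    (hmaj : ∀ x : ℝ, 0 ≤ x → ∫ t in (0 : ℝ)..x, f t ≤ ∫ t in (0 : ℝ)..x, g t)
    (htotal : ∫ t in Set.Ioi (0 : ℝ), f t = ∫ t in Set.Ioi (0 : ℝ), g t)
    (φ : ℝ → ℝ) (hφ : ConcaveOn ℝ (Set.Ici (0 : ℝ)) φ) (hφ0 : φ 0 = 0)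
    (hφf_int : IntegrableOn (fun t => φ (f t)) (Set.Ioi (0 : ℝ)))
    (hφg_int : IntegrableOn (fun t => φ (g t)) (Set.Ioi (0 : ℝ))) :
    ∫ t in Set.Ioi (0 : ℝ), φ (g t) ≤ ∫ t in Set.Ioi (0 : ℝ), φ (f t) := by
  have hD : IntegrableOn (fun t => φ (g t) - φ (f t)) (Ioi 0) := hφg_int.sub hφf_int
  suffices hD_nonpos : ∫ t in Ioi 0, (φ (g t) - φ (f t)) ≤ 0 by
    rw [integral_sub hφg_int hφf_int] at hD_nonpos
    linarith
  have hkey : ∀ X, 0 ≤ X → 0 < f X →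
      ∫ t in 0..X, (φ (g t) - φ (f t)) ≤ ∫ t in Ioi X, |φ (f t)| := fun X hX hfX =>
    intervalIntegral_comp_sub_comp_le_setIntegral_Ioi_abs hX hf_nonneg hg_nonneg hf_anti hf_int
      hg_int hmaj htotal hφ hφ0 hφf_int hφg_int hfX
  rcases hf_anti.forall_pos_or_exists_pos_Ioo_eq_zero_Ioi hf_nonneg
    with hpos | ⟨x₀, hx₀, hpos, hzero⟩
  · exact le_of_tendsto_of_tendsto (intervalIntegral_tendsto_integral_Ioi 0 hD tendsto_id)
      (tendsto_integral_Ioi_zero tendsto_id)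
      ((eventually_gt_atTop 0).mono fun X hX => hkey X hX.le (hpos X hX))
  have hkey₀ : ∫ t in 0..x₀, (φ (g t) - φ (f t)) ≤ ∫ t in Ioi x₀, |φ (f t)| := by
    rcases hx₀.eq_or_lt with rfl | hx₀
    · simpa using setIntegral_nonneg measurableSet_Ioi fun t _ => abs_nonneg (φ (f t))
    · exact intervalIntegral_le_setIntegral_Ioi_of_forall_Ioo hx₀ hD hφf_int.abs
        fun X hX => hkey X hX.1.le (hpos X hX)
  have hg₀ := ae_restrict_Ioi_eq_zero_of_majorizes hx₀ hg_nonneg hf_int hg_int (hmaj x₀ hx₀)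
    htotal hzero
  have hw₀ : ∫ t in Ioi x₀, |φ (f t)| = 0 :=
    setIntegral_eq_zero_of_forall_eq_zero fun t ht => by simp [hzero t ht, hφ0]
  have hD₀ : ∫ t in Ioi x₀, (φ (g t) - φ (f t)) = 0 := by
    refine integral_eq_zero_of_ae ?_
    filter_upwards [hg₀, ae_restrict_mem measurableSet_Ioi] with t hgt ht
    simp [hgt, hzero t ht]
  rw [← intervalIntegral.integral_interval_add_Ioi hD (hD.mono_set (Ioi_subset_Ioi hx₀))]
  linarith

/-- Concave-function characterization of majorization
(continuous Hardy–Littlewood–Pólya inequality): if `f, g` are non-increasing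
nonnegative integrable functions on `[0,∞)` with `∫₀^x f ≤ ∫₀^x g` for every
`x ≥ 0` and equal (finite) total integrals, then for every concave
`φ : [0,∞) → ℝ` with `φ(0) = 0` such that `φ∘f` and `φ∘g` are integrable on
`[0,∞)`, one has `∫₀^∞ φ(f(t)) dt ≥ ∫₀^∞ φ(g(t)) dt`. -/
theorem majorization_concave_characterization
    (f g : ℝ → ℝ)
    (hf_nonneg : ∀ x, 0 ≤ f x) (hg_nonneg : ∀ x, 0 ≤ g x)
    (hf_anti : AntitoneOn f (Set.Ici (0 : ℝ)))
    (hg_anti : AntitoneOn g (Set.Ici (0 : ℝ)))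
    (hf_int : IntegrableOn f (Set.Ioi (0 : ℝ)))
    (hg_int : IntegrableOn g (Set.Ioi (0 : ℝ)))
    (hmaj : ∀ x : ℝ, 0 ≤ x → ∫ t in (0 : ℝ)..x, f t ≤ ∫ t in (0 : ℝ)..x, g t)
    (htotal : ∫ t in Set.Ioi (0 : ℝ), f t = ∫ t in Set.Ioi (0 : ℝ), g t)
    (φ : ℝ → ℝ) (hφ : ConcaveOn ℝ (Set.Ici (0 : ℝ)) φ) (hφ0 : φ 0 = 0)
    (hφf_int : IntegrableOn (fun t => φ (f t)) (Set.Ioi (0 : ℝ)))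
    (hφg_int : IntegrableOn (fun t => φ (g t)) (Set.Ioi (0 : ℝ))) :
    ∫ t in Set.Ioi (0 : ℝ), φ (g t) ≤ ∫ t in Set.Ioi (0 : ℝ), φ (f t) :=
  majorization_concave_characterization_general f g hf_nonneg hg_nonneg hf_anti hf_int hg_int hmaj
    htotal φ hφ hφ0 hφf_int hφg_int
end

section
/- For every real M ≥ 1, Σ_{k=1}^∞ 2^k · log₂( 4·M·4^(−k) + 1 ) ≤ 24·√M·log₂(√M + 1) + 10·√M. -/
/-!
Split the series at the index `K` with `√M ≤ 2^K ≤ 2√M`. Before `K` every logarithm is at most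
`log₂(4M + 1) ≤ 2 + 2·log₂(√M + 1)` and the weights `2^(k+1)` add up to at most `2^(K+1) ≤ 4√M`.
From `K` on, `log₂(1 + x) ≤ x / ln 2` turns the terms into a geometric series of ratio `1/2`,
whose sum is `4M / (2^K ln 2) ≤ 6√M`.
-/

open Real Finset

lemma Real.logb_add_one_le_div_log {b x : ℝ} (hb : 1 < b) (hx : -1 < x) :
    logb b (x + 1) ≤ x / log b := by
  rw [logb]
  gcongr
  · exact (log_pos hb).le
  · linarith [log_le_sub_one_of_pos (by linarith : 0 < x + 1)]

lemma exists_two_pow_mem_Icc {s : ℝ} (hs : 1 ≤ s) :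
    ∃ K : ℕ, s ≤ 2 ^ K ∧ (2 : ℝ) ^ K ≤ 2 * s := by
  obtain ⟨n, hn, hn'⟩ := exists_nat_pow_near hs one_lt_two
  exact ⟨n + 1, hn'.le, by rw [pow_succ]; linarith⟩

lemma sum_range_two_pow_succ_le (K : ℕ) : ∑ k ∈ range K, (2 : ℝ) ^ (k + 1) ≤ 2 ^ (K + 1) := by
  induction K with
  | zero => simp
  | succ K ih => rw [sum_range_succ, pow_succ 2 (K + 1)]; linarith

lemma summable_mul_inv_two_pow_add (c : ℝ) (K : ℕ) : Summable fun k : ℕ ↦ c * 2⁻¹ ^ (k + K) :=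
  ((summable_nat_add_iff K).mpr
    (summable_geometric_of_lt_one (by norm_num) (by norm_num) : Summable fun k ↦ (2⁻¹ : ℝ) ^ k)).mul_left c

lemma logb_four_mul_sq_add_one_le {s : ℝ} (hs : 0 ≤ s) :
    logb 2 (4 * s ^ 2 + 1) ≤ 2 + 2 * logb 2 (s + 1) := by
  calc logb 2 (4 * s ^ 2 + 1) ≤ logb 2 (2 ^ 2 * (s + 1) ^ 2) :=
        logb_le_logb_of_le one_lt_two (by positivity) (by nlinarith)
    _ = 2 + 2 * logb 2 (s + 1) := by
        rw [logb_mul (by positivity) (by positivity), logb_pow, logb_pow,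
          logb_self_eq_one one_lt_two]
        ring

noncomputable def occupancyTerm (M : ℝ) (k : ℕ) : ℝ :=
  2 ^ (k + 1) * logb 2 (4 * M / 4 ^ (k + 1) + 1)

lemma occupancyTerm_nonneg {M : ℝ} (hM : 0 ≤ M) (k : ℕ) : 0 ≤ occupancyTerm M k := by
  have : 0 ≤ 4 * M / 4 ^ (k + 1) := by positivity
  exact mul_nonneg (by positivity) (logb_nonneg one_lt_two (by linarith))

lemma occupancyTerm_le_two_pow_mul_logb {M : ℝ} (hM : 0 ≤ M) (k : ℕ) :
    occupancyTerm M k ≤ 2 ^ (k + 1) * logb 2 (4 * M + 1) := by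
  unfold occupancyTerm
  gcongr
  · exact one_lt_two
  · exact div_le_self (by positivity) (one_le_pow₀ (by norm_num))

lemma occupancyTerm_le_geometric {M : ℝ} (hM : 0 ≤ M) (k : ℕ) :
    occupancyTerm M k ≤ 4 * M / log 2 * 2⁻¹ ^ (k + 1) := by
  have h4 : (4 : ℝ) ^ (k + 1) = 2 ^ (k + 1) * 2 ^ (k + 1) := by rw [← mul_pow]; norm_num
  have hx : 0 ≤ 4 * M / 4 ^ (k + 1) := by positivity
  calc occupancyTerm M k ≤ 2 ^ (k + 1) * (4 * M / 4 ^ (k + 1) / log 2) := by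
        unfold occupancyTerm
        gcongr
        exact logb_add_one_le_div_log one_lt_two (by linarith)
    _ = 4 * M / log 2 * 2⁻¹ ^ (k + 1) := by
        rw [h4, inv_pow]
        field_simp

lemma summable_occupancyTerm {M : ℝ} (hM : 0 ≤ M) : Summable (occupancyTerm M) :=
  .of_nonneg_of_le (occupancyTerm_nonneg hM) (occupancyTerm_le_geometric hM)
    (summable_mul_inv_two_pow_add _ 1)

lemma sum_range_occupancyTerm_le {M : ℝ} (hM : 0 ≤ M) (K : ℕ) :
    ∑ k ∈ range K, occupancyTerm M k ≤ 2 ^ (K + 1) * logb 2 (4 * M + 1) := by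
  have hlog : 0 ≤ logb 2 (4 * M + 1) := logb_nonneg one_lt_two (by linarith)
  calc ∑ k ∈ range K, occupancyTerm M k
        ≤ ∑ k ∈ range K, 2 ^ (k + 1) * logb 2 (4 * M + 1) :=
          sum_le_sum fun k _ ↦ occupancyTerm_le_two_pow_mul_logb hM k
    _ = (∑ k ∈ range K, (2 : ℝ) ^ (k + 1)) * logb 2 (4 * M + 1) := (sum_mul ..).symm
    _ ≤ 2 ^ (K + 1) * logb 2 (4 * M + 1) := by gcongr; exact sum_range_two_pow_succ_le K

lemma tsum_occupancyTerm_nat_add_le {M : ℝ} (hM : 0 ≤ M) (K : ℕ) :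
    ∑' k, occupancyTerm M (k + K) ≤ 4 * M / log 2 * 2⁻¹ ^ K := by
  have hgeom (k : ℕ) : 4 * M / log 2 * 2⁻¹ ^ (k + (K + 1))
      = 4 * M / log 2 * 2⁻¹ ^ (K + 1) * 2⁻¹ ^ k := by ring
  calc ∑' k, occupancyTerm M (k + K)
        ≤ ∑' k, 4 * M / log 2 * 2⁻¹ ^ (k + (K + 1)) :=
          Summable.tsum_le_tsum (fun k ↦ occupancyTerm_le_geometric hM (k + K))
            ((summable_nat_add_iff K).mpr (summable_occupancyTerm hM))
            (summable_mul_inv_two_pow_add _ (K + 1))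
    _ = 4 * M / log 2 * 2⁻¹ ^ K := by
        simp_rw [hgeom]
        rw [tsum_mul_left, tsum_geometric_inv_two]
        ring

lemma tsum_occupancyTerm_le {M : ℝ} (hM : 0 ≤ M) (K : ℕ) :
    ∑' k, occupancyTerm M k ≤ 2 ^ (K + 1) * logb 2 (4 * M + 1) + 4 * M / log 2 * 2⁻¹ ^ K := by
  rw [← (summable_occupancyTerm hM).sum_add_tsum_nat_add K]
  exact add_le_add (sum_range_occupancyTerm_le hM K) (tsum_occupancyTerm_nat_add_le hM K)

/-- For every real `M ≥ 1`,
`∑_{k=1}^∞ 2^k·log₂(4M·4^{-k} + 1) ≤ 24·√M·log₂(√M + 1) + 10·√M`. -/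
theorem occupancy_series_bound (M : ℝ) (hM : 1 ≤ M) :
    ∑' k : ℕ, (2 : ℝ) ^ (k + 1) * Real.logb 2 (4 * M / 4 ^ (k + 1) + 1)
      ≤ 24 * Real.sqrt M * Real.logb 2 (Real.sqrt M + 1) + 10 * Real.sqrt M := by
  set s := √M
  have hs : 1 ≤ s := one_le_sqrt.mpr hM
  have hMs : M = s ^ 2 := (sq_sqrt (by linarith)).symm
  obtain ⟨K, hsK, hKs⟩ := exists_two_pow_mem_Icc hs
  have hL : 1 ≤ logb 2 (s + 1) :=
    (logb_self_eq_one one_lt_two).symm.trans_le (logb_le_logb_of_le one_lt_two two_pos (by linarith))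
  have hhead : 2 ^ (K + 1) * logb 2 (4 * M + 1) ≤ 4 * s * (2 + 2 * logb 2 (s + 1)) := by
    have hlog : 0 ≤ logb 2 (4 * s ^ 2 + 1) := logb_nonneg one_lt_two (by nlinarith)
    calc 2 ^ (K + 1) * logb 2 (4 * M + 1) ≤ 2 * (2 * s) * logb 2 (4 * s ^ 2 + 1) := by
          rw [hMs, pow_succ, mul_comm _ (2 : ℝ)]; gcongr
      _ ≤ 4 * s * (2 + 2 * logb 2 (s + 1)) := by
          nlinarith [logb_four_mul_sq_add_one_le (by linarith : 0 ≤ s)]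
  have htail : 4 * M / log 2 * 2⁻¹ ^ K ≤ 6 * s := by
    calc 4 * M / log 2 * 2⁻¹ ^ K = 4 * s / log 2 * (s / 2 ^ K) := by rw [hMs, inv_pow]; ring
      _ ≤ 4 * s / (2 / 3) * 1 := by
          gcongr
          · linarith [log_two_gt_d9]
          · exact (div_le_one (by positivity)).mpr hsK
      _ = 6 * s := by ring
  calc _ = ∑' k, occupancyTerm M k := rfl
    _ ≤ _ := tsum_occupancyTerm_le (by linarith) K
    _ ≤ _ := by linarith [mul_le_mul_of_nonneg_left hL (by linarith : 0 ≤ s)]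
end

section
/- Let c > 1 and λ > 1 be reals and n ≥ 1 an integer. Let t₀ = (c·(λ+1))^(1/λ) and define f* : [0,∞) → ℝ by f*(x) = c·λ·t₀^(−λ−1) for x ≤ t₀ and f*(x) = c·λ·x^(−λ−1) for x > t₀. Then ∫₀^∞ 92·√(n·f*(x))·log₂(√(n·f*(x)) + 1) dx ≤ 276·(c·(λ+1))^(1/λ)·√n·log₂(√n + 1)/min(λ − 1, 1). -/
open MeasureTheory

/-!
Since `f*` is non-increasing and `f*(0) ≤ 1`, we have `√(n f*(x)) ≤ √n`, so the integrand is at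
most `92 √n log₂(√n + 1) √(f*(x))`. The function `√f*` is constant on `(0, t₀]` and equals
`√(cλ) x^{-(λ+1)/2}` beyond `t₀`, which is integrable because `λ > 1`; this gives
`∫₀^∞ √f* = √(f*(0)) t₀ (λ+1)/(λ-1) ≤ 3 t₀ / min(λ-1, 1)`.
-/

open Set Real

lemma sqrt_mul_logb_sqrt_mul_add_one_le {N y : ℝ} (hN : 0 ≤ N) (hy : y ≤ 1) :
    √(N * y) * logb 2 (√(N * y) + 1) ≤ √N * logb 2 (√N + 1) * √y := by
  rw [sqrt_mul hN]
  have hle : √N * √y ≤ √N := mul_le_of_le_one_right (sqrt_nonneg N) (sqrt_le_one.mpr hy)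
  calc √N * √y * logb 2 (√N * √y + 1) ≤ √N * √y * logb 2 (√N + 1) := by
        gcongr
        norm_num
    _ = √N * logb 2 (√N + 1) * √y := by ring

lemma logb_two_sqrt_add_one_nonneg (x : ℝ) : 0 ≤ logb 2 (√x + 1) :=
  logb_nonneg one_lt_two (le_add_of_nonneg_left (sqrt_nonneg x))

lemma sqrt_mul_rpow {b x : ℝ} (hb : 0 ≤ b) (hx : 0 ≤ x) (p : ℝ) :
    √(b * x ^ p) = √b * x ^ (p / 2) := by
  rw [sqrt_mul hb, sqrt_eq_rpow (x ^ p), ← rpow_mul hx, mul_one_div]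

section ConstThenRpow

variable {f : ℝ → ℝ} {t a b : ℝ}

lemma integrableOn_Ioi_zero_of_const_then_rpow (ht : 0 < t) (ha : a < -1)
    (hle : EqOn f (fun _ ↦ b * t ^ a) (Ioc 0 t)) (hgt : EqOn f (fun x ↦ b * x ^ a) (Ioi t)) :
    IntegrableOn f (Ioi 0) := by
  have htail : IntegrableOn (fun x ↦ b * x ^ a) (Ioi t) :=
    (integrableOn_Ioi_rpow_of_lt ha ht).const_mul b
  rw [← Ioc_union_Ioi_eq_Ioi ht.le]
  exact ((integrableOn_const measure_Ioc_lt_top.ne).congr_fun hle.symm measurableSet_Ioc).union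
    (htail.congr_fun hgt.symm measurableSet_Ioi)

lemma integral_Ioi_zero_of_const_then_rpow (ht : 0 < t) (ha : a < -1)
    (hle : EqOn f (fun _ ↦ b * t ^ a) (Ioc 0 t)) (hgt : EqOn f (fun x ↦ b * x ^ a) (Ioi t)) :
    ∫ x in Ioi 0, f x = b * t ^ (a + 1) * (a / (a + 1)) := by
  have hf := integrableOn_Ioi_zero_of_const_then_rpow ht ha hle hgt
  have ha1 : a + 1 ≠ 0 := by linarith
  rw [← Ioc_union_Ioi_eq_Ioi ht.le, setIntegral_union (Ioc_disjoint_Ioi le_rfl) measurableSet_Ioi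
      (hf.mono_set Ioc_subset_Ioi_self) (hf.mono_set (Ioi_subset_Ioi ht.le)),
    setIntegral_congr_fun measurableSet_Ioc hle, setIntegral_congr_fun measurableSet_Ioi hgt,
    setIntegral_const, integral_const_mul, integral_Ioi_rpow_of_lt ha ht, measureReal_def,
    volume_Ioc, ENNReal.toReal_ofReal (by linarith), sub_zero, smul_eq_mul, rpow_add_one ht.ne']
  field_simp
  ring

end ConstThenRpow

/-- The breakpoint `t₀` of `fstar`. -/
noncomputable def fstarKnee (c lam : ℝ) : ℝ := (c * (lam + 1)) ^ (1 / lam)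

section Fstar

variable {c lam : ℝ}

lemma fstarKnee_pos (hc : 0 < c) (hlam : 0 < lam) : 0 < fstarKnee c lam :=
  rpow_pos_of_pos (by positivity) _

lemma fstar_of_le {x : ℝ} (hx : x ≤ fstarKnee c lam) :
    fstar c lam x = c * lam * fstarKnee c lam ^ (-lam - 1) :=
  if_pos hx

lemma fstar_of_lt {x : ℝ} (hx : fstarKnee c lam < x) :
    fstar c lam x = c * lam * x ^ (-lam - 1) :=
  if_neg hx.not_ge

lemma fstar_le_fstar_zero (hc : 0 < c) (hlam : 0 < lam) (x : ℝ) :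
    fstar c lam x ≤ fstar c lam 0 := by
  have ht := fstarKnee_pos hc hlam
  rw [fstar_of_le ht.le]
  rcases le_or_gt x (fstarKnee c lam) with hx | hx
  · rw [fstar_of_le hx]
  · rw [fstar_of_lt hx]
    exact mul_le_mul_of_nonneg_left (rpow_le_rpow_of_nonpos ht hx.le (by linarith))
      (by positivity)

lemma fstar_zero_le_one (hc : 0 ≤ c) (hlam : 0 < lam) (hcl : 1 ≤ c * (lam + 1)) :
    fstar c lam 0 ≤ 1 := by
  have ht : 1 ≤ fstarKnee c lam := one_le_rpow hcl (by positivity)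
  have hpow : fstarKnee c lam ^ lam = c * (lam + 1) := by
    rw [fstarKnee, one_div, rpow_inv_rpow (by linarith) hlam.ne']
  rw [fstar_of_le (by linarith)]
  calc c * lam * fstarKnee c lam ^ (-lam - 1)
      ≤ fstarKnee c lam ^ lam * fstarKnee c lam ^ (-lam - 1) := by
        rw [hpow]; gcongr; linarith
    _ = fstarKnee c lam ^ (-1 : ℝ) := by rw [← rpow_add (by linarith)]; ring_nf
    _ ≤ 1 := rpow_le_one_of_one_le_of_nonpos ht (by norm_num)

lemma sqrt_fstar_eqOn_Ioc (hc : 0 < c) (hlam : 0 < lam) :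
    EqOn (fun x ↦ √(fstar c lam x))
      (fun _ ↦ √(c * lam) * fstarKnee c lam ^ ((-lam - 1) / 2)) (Ioc 0 (fstarKnee c lam)) :=
  fun x hx ↦ (congrArg sqrt (fstar_of_le hx.2)).trans
    (sqrt_mul_rpow (by positivity) (fstarKnee_pos hc hlam).le _)

lemma sqrt_fstar_eqOn_Ioi (hc : 0 < c) (hlam : 0 < lam) :
    EqOn (fun x ↦ √(fstar c lam x)) (fun x ↦ √(c * lam) * x ^ ((-lam - 1) / 2))
      (Ioi (fstarKnee c lam)) :=
  fun x hx ↦ (congrArg sqrt (fstar_of_lt hx)).trans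
    (sqrt_mul_rpow (by positivity) ((fstarKnee_pos hc hlam).trans hx).le _)

lemma integrableOn_sqrt_fstar (hc : 0 < c) (hlam : 1 < lam) :
    IntegrableOn (fun x ↦ √(fstar c lam x)) (Ioi 0) :=
  integrableOn_Ioi_zero_of_const_then_rpow (fstarKnee_pos hc (by linarith)) (by linarith)
    (sqrt_fstar_eqOn_Ioc hc (by linarith)) (sqrt_fstar_eqOn_Ioi hc (by linarith))

lemma integral_sqrt_fstar (hc : 0 < c) (hlam : 1 < lam) :
    ∫ x in Ioi 0, √(fstar c lam x)
      = √(fstar c lam 0) * fstarKnee c lam * ((lam + 1) / (lam - 1)) := by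
  have ht := fstarKnee_pos hc (by linarith : 0 < lam)
  rw [integral_Ioi_zero_of_const_then_rpow ht (by linarith)
      (sqrt_fstar_eqOn_Ioc hc (by linarith)) (sqrt_fstar_eqOn_Ioi hc (by linarith)),
    fstar_of_le ht.le, sqrt_mul_rpow (by positivity) ht.le, rpow_add_one ht.ne']
  have : lam - 1 ≠ 0 := by linarith
  have : -lam - 1 + 2 ≠ 0 := by linarith
  field_simp
  ring

end Fstar

lemma add_one_div_sub_one_le_three_div_min {lam : ℝ} (hlam : 1 < lam) :
    (lam + 1) / (lam - 1) ≤ 3 / min (lam - 1) 1 := by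
  have h : 0 < lam - 1 := by linarith
  rcases min_cases (lam - 1) 1 with ⟨hmin, hle⟩ | ⟨hmin, hle⟩ <;> rw [hmin]
  · gcongr; linarith
  · rw [div_le_iff₀ h]; linarith

theorem fstar_integral_bound_general
    (c lam : ℝ) (hc : 1 < c) (hlam : 1 < lam) (n : ℕ) :
    ∫ x in Set.Ioi (0 : ℝ),
        92 * Real.sqrt (n * fstar c lam x)
          * Real.logb 2 (Real.sqrt (n * fstar c lam x) + 1)
      ≤ 276 * (c * (lam + 1)) ^ (1 / lam) * Real.sqrt n
          * Real.logb 2 (Real.sqrt n + 1) / min (lam - 1) 1 := by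
  have hc0 : 0 < c := by linarith
  have hlam0 : 0 < lam := by linarith
  have hf1 : ∀ x, fstar c lam x ≤ 1 := fun x ↦
    (fstar_le_fstar_zero hc0 hlam0 x).trans (fstar_zero_le_one hc0.le hlam0 (by nlinarith))
  set K := √n * logb 2 (√n + 1)
  have hK : 0 ≤ K := mul_nonneg (sqrt_nonneg _) (logb_two_sqrt_add_one_nonneg _)
  calc ∫ x in Ioi 0, 92 * √(n * fstar c lam x) * logb 2 (√(n * fstar c lam x) + 1)
      ≤ ∫ x in Ioi 0, 92 * K * √(fstar c lam x) := by
        refine integral_mono_of_nonneg (Filter.Eventually.of_forall fun x ↦ ?_)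
          ((integrableOn_sqrt_fstar hc0 hlam).const_mul _) (Filter.Eventually.of_forall fun x ↦ ?_)
        · have := logb_two_sqrt_add_one_nonneg (n * fstar c lam x)
          positivity
        · dsimp only
          rw [mul_assoc, mul_assoc]
          exact mul_le_mul_of_nonneg_left
            (sqrt_mul_logb_sqrt_mul_add_one_le n.cast_nonneg (hf1 x)) (by norm_num)
    _ = 92 * K * (√(fstar c lam 0) * fstarKnee c lam * ((lam + 1) / (lam - 1))) := by
        rw [integral_const_mul, integral_sqrt_fstar hc0 hlam]
    _ ≤ 92 * K * (1 * fstarKnee c lam * (3 / min (lam - 1) 1)) := by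
        have := fstarKnee_pos hc0 hlam0
        gcongr 92 * K * (?_ * _ * ?_)
        · exact sqrt_le_one.mpr (hf1 0)
        · exact add_one_div_sub_one_le_three_div_min hlam
    _ = 276 * (c * (lam + 1)) ^ (1 / lam) * √n * logb 2 (√n + 1) / min (lam - 1) 1 := by
        rw [fstarKnee]; ring

/-- For the comparison density `f*`,
`∫₀^∞ 92·√(n·f*(x))·log₂(√(n·f*(x)) + 1) dx
  ≤ 276·(c·(λ+1))^{1/λ}·√n·log₂(√n + 1)/min(λ − 1, 1)`. -/
theorem fstar_integral_bound
    (c lam : ℝ) (hc : 1 < c) (hlam : 1 < lam) (n : ℕ) (hn : 1 ≤ n) :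
    ∫ x in Set.Ioi (0 : ℝ),
        92 * Real.sqrt (n * fstar c lam x)
          * Real.logb 2 (Real.sqrt (n * fstar c lam x) + 1)
      ≤ 276 * (c * (lam + 1)) ^ (1 / lam) * Real.sqrt n
          * Real.logb 2 (Real.sqrt n + 1) / min (lam - 1) 1 :=
  fstar_integral_bound_general c lam hc hlam n
end
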